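/- arXiv:2206.06257 — 4 statements merged into one kernel-verified Lean document; each statement's English description precedes it below -/
import Mathlib

section
/- Let E be a real inner product space, C ⊆ E a convex set, μ > 0, and f : E → ℝ a differentiable function that is μ-strongly concave on C. Let ε ≥ 0 and let δ*, δ ∈ C be such that δ* satisfies the exact first-order maximality condition ⟨δ' − δ*, ∇f(δ*)⟩ ≤ 0 for all δ' ∈ C, and δ satisfies the ε-approximate first-order condition ⟨δ' − δ, ∇f(δ)⟩ ≤ ε for all δ' ∈ C. Then μ‖δ − δ*‖² ≤ ε. -/
open scoped RealInnerProductSpace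

theorem neg_add_le_inner_sub_sub_of_inner_le {E : Type*} [SeminormedAddCommGroup E]
    [InnerProductSpace ℝ E] {g : E → E} {x y : E} {a b : ℝ}
    (hx : ⟪y - x, g x⟫ ≤ a) (hy : ⟪x - y, g y⟫ ≤ b) :
    -(a + b) ≤ ⟪g x - g y, x - y⟫ := by
  have hyx : ⟪y - x, g x⟫ = -⟪x - y, g x⟫ := by rw [← neg_sub, inner_neg_left]
  rw [inner_sub_left, real_inner_comm (x - y) (g x), real_inner_comm (x - y) (g y)]
  linarith

theorem approx_maximizer_close_general {E : Type*} [NormedAddCommGroup E] [InnerProductSpace ℝ E]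
    (C : Set E) (μ : ℝ)
    (f' : E → E)
    (hconc : ∀ x ∈ C, ∀ y ∈ C,
      (inner ℝ (f' x - f' y) (x - y) : ℝ) ≤ -μ * ‖x - y‖ ^ 2)
    (ε : ℝ) (δstar δ : E) (hδstar : δstar ∈ C) (hδ : δ ∈ C)
    (hopt : ∀ δ' ∈ C, (inner ℝ (δ' - δstar) (f' δstar) : ℝ) ≤ 0)
    (happrox : ∀ δ' ∈ C, (inner ℝ (δ' - δ) (f' δ) : ℝ) ≤ ε) :
    μ * ‖δ - δstar‖ ^ 2 ≤ ε := by
  have hmono := hconc δ hδ δstar hδstar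
  have hslack := neg_add_le_inner_sub_sub_of_inner_le (happrox δstar hδstar) (hopt δ hδ)
  linarith

/-- If `f` is differentiable and `μ`-strongly concave on a convex set `C`
(in the sense that `⟪∇f x − ∇f y, x − y⟫ ≤ −μ‖x − y‖²` on `C`), `δstar ∈ C` satisfies the
exact first-order maximality condition and `δ ∈ C` satisfies the `ε`-approximate first-order
condition, then `μ‖δ − δstar‖² ≤ ε`. -/
theorem approx_maximizer_close {E : Type*} [NormedAddCommGroup E] [InnerProductSpace ℝ E]
    [CompleteSpace E]
    (C : Set E) (hC : Convex ℝ C) (μ : ℝ) (hμ : 0 < μ)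
    (f : E → ℝ) (f' : E → E) (hf : ∀ x, HasGradientAt f (f' x) x)
    (hconc : ∀ x ∈ C, ∀ y ∈ C,
      (inner ℝ (f' x - f' y) (x - y) : ℝ) ≤ -μ * ‖x - y‖ ^ 2)
    (ε : ℝ) (hε : 0 ≤ ε) (δstar δ : E) (hδstar : δstar ∈ C) (hδ : δ ∈ C)
    (hopt : ∀ δ' ∈ C, (inner ℝ (δ' - δstar) (f' δstar) : ℝ) ≤ 0)
    (happrox : ∀ δ' ∈ C, (inner ℝ (δ' - δ) (f' δ) : ℝ) ≤ ε) :
    μ * ‖δ - δstar‖ ^ 2 ≤ ε :=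
  approx_maximizer_close_general C μ f' hconc ε δstar δ hδstar hδ hopt happrox
end

section
/- Let E and F be real inner product spaces, C ⊆ E a convex set, μ > 0, L > 0, ε ≥ 0, and f : E → ℝ a differentiable function that is μ-strongly concave on C. Let G : E → F satisfy ‖G(x) − G(y)‖ ≤ L‖x − y‖ for all x, y ∈ C. Suppose δ* ∈ C satisfies ⟨δ' − δ*, ∇f(δ*)⟩ ≤ 0 for all δ' ∈ C, and δ ∈ C satisfies the (μ·ε/L²)-approximate first-order condition ⟨δ' − δ, ∇f(δ)⟩ ≤ μ·ε/L² for all δ' ∈ C. Then ‖G(δ) − G(δ*)‖² ≤ ε. -/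
/-! Adding the two first-order conditions, each tested at the other point, bounds
`⟪∇f δ - ∇f δ*, δ - δ*⟫` from below by `-μ ε / L²`; strong concavity bounds it from above by
`-μ ‖δ - δ*‖²`. Hence `‖δ - δ*‖² ≤ ε / L²`, and the Lipschitz bound on `G` multiplies this by `L²`. -/

open scoped RealInnerProductSpace

lemma mul_norm_sub_sq_le_of_firstOrder {E : Type*} [NormedAddCommGroup E] [InnerProductSpace ℝ E]
    {g : E → E} {μ η : ℝ} {x y : E}
    (hmono : ⟪g x - g y, x - y⟫ ≤ -μ * ‖x - y‖ ^ 2)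
    (hy : ⟪x - y, g y⟫ ≤ 0) (hx : ⟪y - x, g x⟫ ≤ η) :
    μ * ‖x - y‖ ^ 2 ≤ η := by
  have hsplit : ⟪g x - g y, x - y⟫ = -⟪y - x, g x⟫ - ⟪x - y, g y⟫ := by
    rw [← neg_sub x y, inner_neg_left, inner_sub_left, real_inner_comm (g x), real_inner_comm (g y)]
    ring
  linarith

theorem gradient_error_of_approx_maximizer_general {E F : Type*}
    [NormedAddCommGroup E] [InnerProductSpace ℝ E]
    [NormedAddCommGroup F] [InnerProductSpace ℝ F]
    (C : Set E) (μ L ε : ℝ) (hμ : 0 < μ) (hL : 0 < L)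
    (f' : E → E)
    (hconc : ∀ x ∈ C, ∀ y ∈ C,
      (inner ℝ (f' x - f' y) (x - y) : ℝ) ≤ -μ * ‖x - y‖ ^ 2)
    (G : E → F) (hGlip : ∀ x ∈ C, ∀ y ∈ C, ‖G x - G y‖ ≤ L * ‖x - y‖)
    (δstar δ : E) (hδstar : δstar ∈ C) (hδ : δ ∈ C)
    (hopt : ∀ δ' ∈ C, (inner ℝ (δ' - δstar) (f' δstar) : ℝ) ≤ 0)
    (happrox : ∀ δ' ∈ C, (inner ℝ (δ' - δ) (f' δ) : ℝ) ≤ μ * ε / L ^ 2) :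
    ‖G δ - G δstar‖ ^ 2 ≤ ε := by
  have hdist : μ * ‖δ - δstar‖ ^ 2 ≤ μ * (ε / L ^ 2) := by
    rw [← mul_div_assoc]
    exact mul_norm_sub_sq_le_of_firstOrder (hconc δ hδ δstar hδstar) (hopt δ hδ)
      (happrox δstar hδstar)
  calc ‖G δ - G δstar‖ ^ 2 ≤ (L * ‖δ - δstar‖) ^ 2 :=
        pow_le_pow_left₀ (norm_nonneg _) (hGlip δ hδ δstar hδstar) 2
    _ = L ^ 2 * ‖δ - δstar‖ ^ 2 := mul_pow _ _ _
    _ ≤ L ^ 2 * (ε / L ^ 2) := by gcongr; exact le_of_mul_le_mul_left hdist hμ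
    _ = ε := mul_div_cancel₀ _ (by positivity)

/-- Lemma A1 of the paper. If `f` is differentiable and `μ`-strongly concave
on a convex set `C`, `G` is `L`-Lipschitz on `C`, `δstar ∈ C` is an exact first-order maximizer
and `δ ∈ C` satisfies the `(μ·ε/L²)`-approximate first-order condition, then
`‖G δ − G δstar‖² ≤ ε`. -/
theorem gradient_error_of_approx_maximizer {E F : Type*}
    [NormedAddCommGroup E] [InnerProductSpace ℝ E] [CompleteSpace E]
    [NormedAddCommGroup F] [InnerProductSpace ℝ F]
    (C : Set E) (hC : Convex ℝ C) (μ L ε : ℝ) (hμ : 0 < μ) (hL : 0 < L) (hε : 0 ≤ ε)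
    (f : E → ℝ) (f' : E → E) (hf : ∀ x, HasGradientAt f (f' x) x)
    (hconc : ∀ x ∈ C, ∀ y ∈ C,
      (inner ℝ (f' x - f' y) (x - y) : ℝ) ≤ -μ * ‖x - y‖ ^ 2)
    (G : E → F) (hGlip : ∀ x ∈ C, ∀ y ∈ C, ‖G x - G y‖ ≤ L * ‖x - y‖)
    (δstar δ : E) (hδstar : δstar ∈ C) (hδ : δ ∈ C)
    (hopt : ∀ δ' ∈ C, (inner ℝ (δ' - δstar) (f' δstar) : ℝ) ≤ 0)
    (happrox : ∀ δ' ∈ C, (inner ℝ (δ' - δ) (f' δ) : ℝ) ≤ μ * ε / L ^ 2) :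
    ‖G δ - G δstar‖ ^ 2 ≤ ε :=
  gradient_error_of_approx_maximizer_general C μ L ε hμ hL f' hconc G hGlip δstar δ hδstar hδ hopt
    happrox
end

section
/- Let 0 ≤ β₂ < 1, G > 0, d a positive integer, and g, v ∈ ℝᵈ with (1 − β₂)·g_j² ≤ v_j ≤ G² for every coordinate j. Define u ∈ ℝᵈ by u_j = g_j/√(v_j) when v_j > 0 and u_j = 0 otherwise, and assume u ≠ 0. Then for every a ∈ ℝᵈ and every index j with a_j·g_j ≥ 0, a_j·u_j/‖u‖₂ ≥ √((1 − β₂)/(G²·d)) · a_j·g_j. -/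
/-! Since `√v_j = 0` when `v_j ≤ 0`, and Lean's `x / 0 = 0`, the vector `u` is just `g / √v`.
Then `(1 - β₂) g_j² ≤ v_j` gives `u_j² ≤ 1 / (1 - β₂)`, hence `‖u‖ ≤ √(d / (1 - β₂))`;
it also forces `g_j = 0` when `v_j ≤ 0`, so `a_j g_j = √v_j · a_j u_j ≤ G · a_j u_j`.
Dividing the second bound by the first gives the claim. -/

open Real

lemma ite_pos_div_sqrt_eq (x y : ℝ) : (if 0 < y then x / √y else 0) = x / √y := by
  split_ifs with hy
  · rfl
  · rw [sqrt_eq_zero'.mpr (not_lt.mp hy), div_zero]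

section MulSqLe

variable {c x y : ℝ}

lemma div_sqrt_sq_le_one_div_of_mul_sq_le (hc : 0 < c) (h : c * x ^ 2 ≤ y) :
    (x / √y) ^ 2 ≤ 1 / c := by
  rcases le_or_gt y 0 with hy | hy
  · rw [sqrt_eq_zero'.mpr hy, div_zero, zero_pow two_ne_zero]
    positivity
  · rw [div_pow, sq_sqrt hy.le, div_le_div_iff₀ hy hc]
    linarith

lemma sqrt_mul_div_sqrt_of_mul_sq_le (hc : 0 < c) (h : c * x ^ 2 ≤ y) :
    √y * (x / √y) = x := by
  rcases le_or_gt y 0 with hy | hy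
  · have hx : x = 0 := pow_eq_zero_iff two_ne_zero |>.mp <|
      le_antisymm (by nlinarith) (sq_nonneg x)
    simp [hx]
  · exact mul_div_cancel₀ x (sqrt_pos.mpr hy).ne'

end MulSqLe

lemma EuclideanSpace.norm_le_sqrt_card_mul_of_sq_le {ι : Type*} [Fintype ι]
    {x : EuclideanSpace ℝ ι} {C : ℝ} (hx : ∀ i, x i ^ 2 ≤ C) :
    ‖x‖ ≤ √(Fintype.card ι * C) := by
  rw [EuclideanSpace.norm_eq]
  gcongr
  calc ∑ i, ‖x i‖ ^ 2 ≤ ∑ _i : ι, C := Finset.sum_le_sum fun i _ => by simpa using hx i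
    _ = Fintype.card ι * C := by simp

theorem lamb_descent_coordinate_general (β₂ G : ℝ) (hβ₂' : β₂ < 1) (hG : 0 < G)
    (d : ℕ) (g v : EuclideanSpace ℝ (Fin d))
    (hvlow : ∀ j, (1 - β₂) * (g j) ^ 2 ≤ v j) (hvhigh : ∀ j, v j ≤ G ^ 2)
    (u : EuclideanSpace ℝ (Fin d))
    (hu : ∀ j, u j = if 0 < v j then g j / Real.sqrt (v j) else 0)
    (hune : u ≠ 0)
    (a : EuclideanSpace ℝ (Fin d)) (j : Fin d) (hag : 0 ≤ a j * g j) :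
    Real.sqrt ((1 - β₂) / (G ^ 2 * d)) * (a j * g j) ≤ a j * u j / ‖u‖ := by
  have hβ : 0 < 1 - β₂ := by linarith
  have hu' (i : Fin d) : u i = g i / √(v i) := (hu i).trans (ite_pos_div_sqrt_eq _ _)
  have hnorm : ‖u‖ ≤ √(d / (1 - β₂)) := by
    have := EuclideanSpace.norm_le_sqrt_card_mul_of_sq_le
      fun i => (hu' i).symm ▸ div_sqrt_sq_le_one_div_of_mul_sq_le hβ (hvlow i)
    rwa [Fintype.card_fin, ← div_eq_mul_one_div] at this
  have hau : 0 ≤ a j * u j := by rw [hu', ← mul_div_assoc]; positivity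
  have hag_eq : a j * g j = √(v j) * (a j * u j) := by
    rw [hu', mul_left_comm, sqrt_mul_div_sqrt_of_mul_sq_le hβ (hvlow j)]
  have hsqrt_v : √(v j) ≤ G := (sqrt_le_sqrt (hvhigh j)).trans_eq (sqrt_sq hG.le)
  have hconst : √((1 - β₂) / (G ^ 2 * d)) * G = 1 / √(d / (1 - β₂)) := by
    rw [mul_comm (G ^ 2), ← div_div, sqrt_div' _ (sq_nonneg G), sqrt_sq hG.le,
      div_mul_cancel₀ _ hG.ne', one_div, ← sqrt_inv, inv_div]
  calc √((1 - β₂) / (G ^ 2 * d)) * (a j * g j)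
      ≤ √((1 - β₂) / (G ^ 2 * d)) * G * (a j * u j) := by
        rw [hag_eq, mul_assoc]; gcongr
    _ = a j * u j * (1 / √(d / (1 - β₂))) := by rw [hconst, mul_comm]
    _ ≤ a j * u j / ‖u‖ := by
        rw [div_eq_mul_one_div _ ‖u‖]
        have hu_pos : 0 < ‖u‖ := norm_pos_iff.mpr hune
        gcongr

/-- inequality (a) of (eq.t1bd) in the paper. Let `0 ≤ β₂ < 1`, `G > 0`,
and `g, v ∈ ℝᵈ` with `(1 − β₂)g_j² ≤ v_j ≤ G²` componentwise. Define `u_j = g_j/√v_j` when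
`v_j > 0` and `u_j = 0` otherwise, and assume `u ≠ 0`. Then for every `a ∈ ℝᵈ` and every
index `j` with `a_j·g_j ≥ 0`, `a_j·u_j/‖u‖₂ ≥ √((1 − β₂)/(G²·d)) · a_j·g_j`. -/
theorem lamb_descent_coordinate (β₂ G : ℝ) (hβ₂ : 0 ≤ β₂) (hβ₂' : β₂ < 1) (hG : 0 < G)
    (d : ℕ) (hd : 0 < d) (g v : EuclideanSpace ℝ (Fin d))
    (hvlow : ∀ j, (1 - β₂) * (g j) ^ 2 ≤ v j) (hvhigh : ∀ j, v j ≤ G ^ 2)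
    (u : EuclideanSpace ℝ (Fin d))
    (hu : ∀ j, u j = if 0 < v j then g j / Real.sqrt (v j) else 0)
    (hune : u ≠ 0)
    (a : EuclideanSpace ℝ (Fin d)) (j : Fin d) (hag : 0 ≤ a j * g j) :
    Real.sqrt ((1 - β₂) / (G ^ 2 * d)) * (a j * g j) ≤ a j * u j / ‖u‖ :=
  lamb_descent_coordinate_general β₂ G hβ₂' hG d g v hvlow hvhigh u hu hune a j hag
end

section
/- Fix an integer s ≥ 1 and a nonzero vector g ∈ ℝᵈ. For each coordinate i let r_i = |g_i|/‖g‖₂, choose l_i ∈ {0, 1, …, s−1} with l_i/s ≤ r_i ≤ (l_i+1)/s, and let ξ_i (independent across coordinates) take value l_i/s with probability 1 − (s·r_i − l_i) and value (l_i+1)/s with probability s·r_i − l_i. Define the randomized quantizer Q(g)_i = ‖g‖₂ · sign(g_i) · ξ_i. Then E[‖Q(g) − g‖₂²] ≤ min{ d/s², √d/s } · ‖g‖₂². -/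
/-! Coordinatewise, `Q(g)_i - g_i = ‖g‖ sign(g_i) (ξ_i - r_i)` and `ξ_i` is a two-point variable with
mean `r_i`, so by linearity of expectation the total error is `∑ ‖g‖² sign(g_i)² p_i(1 - p_i)/s²`
with `p_i = s r_i - l_i`. Now `p(1 - p) ≤ 1/4` gives the bound `d/s² · ‖g‖²`, while
`p(1 - p) ≤ p ≤ s r_i` gives `‖g‖ ∑ |g_i| / s`, which is at most `√d/s · ‖g‖²` by Cauchy–Schwarz. -/

open MeasureTheory ProbabilityTheory Finset

lemma Real.sign_mul_abs (x : ℝ) : Real.sign x * |x| = x := by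
  rcases lt_trichotomy x 0 with hx | rfl | hx
  · rw [Real.sign_of_neg hx, abs_of_neg hx]
    ring
  · simp
  · rw [Real.sign_of_pos hx, abs_of_pos hx, one_mul]

lemma Real.sign_sq_le_one (x : ℝ) : Real.sign x ^ 2 ≤ 1 := by
  rcases Real.sign_apply_eq x with h | h | h <;> simp [h]

lemma Real.mul_sign_sq_mul_le (G x : ℝ) {V B : ℝ} (hV : V ≤ B) (hB : 0 ≤ B) :
    (G * Real.sign x) ^ 2 * V ≤ G ^ 2 * B := by
  refine (mul_le_mul_of_nonneg_left hV (sq_nonneg _)).trans (mul_le_mul_of_nonneg_right ?_ hB)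
  rw [mul_pow]
  exact mul_le_of_le_one_right (sq_nonneg _) (Real.sign_sq_le_one x)

namespace EuclideanSpace

variable {ι : Type*} [Fintype ι]

lemma norm_mul_abs_div_norm (x : EuclideanSpace ℝ ι) (i : ι) : ‖x‖ * (|x i| / ‖x‖) = |x i| := by
  rcases eq_or_ne x 0 with rfl | hx
  · simp
  · exact mul_div_cancel₀ _ (norm_ne_zero_iff.mpr hx)

lemma norm_mul_sign_mul_abs_div_norm (x : EuclideanSpace ℝ ι) (i : ι) :
    ‖x‖ * Real.sign (x i) * (|x i| / ‖x‖) = x i := by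
  rw [mul_right_comm, norm_mul_abs_div_norm, mul_comm, Real.sign_mul_abs]

lemma sum_abs_le_sqrt_card_mul_norm (x : EuclideanSpace ℝ ι) :
    ∑ i, |x i| ≤ √(Fintype.card ι) * ‖x‖ := by
  rw [← Real.sqrt_sq (norm_nonneg x), ← Real.sqrt_mul (Nat.cast_nonneg _)]
  apply Real.le_sqrt_of_sq_le
  simpa [real_norm_sq_eq, sq_abs] using sq_sum_le_card_mul_sum_sq (s := univ) (f := fun i => |x i|)

end EuclideanSpace

section TwoValued

variable {Ω α : Type*} {X : Ω → α} {a b : α}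

lemma comp_eq_add_indicator_of_two_valued (hX : ∀ ω, X ω = a ∨ X ω = b) (f : α → ℝ) :
    (fun ω => f (X ω)) = fun ω => f a + {ω | X ω = b}.indicator (fun _ => f b - f a) ω := by
  funext ω
  by_cases hb : X ω = b
  · simp [hb]
  · rw [Set.indicator_of_notMem (s := {ω | X ω = b}) hb, (hX ω).resolve_right hb, add_zero]

variable [MeasurableSpace Ω] {P : Measure Ω} [MeasurableSpace α] [MeasurableSingletonClass α]

lemma integrable_comp_of_two_valued [IsFiniteMeasure P] (hXm : Measurable X)
    (hX : ∀ ω, X ω = a ∨ X ω = b) (f : α → ℝ) : Integrable (fun ω => f (X ω)) P := by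
  rw [comp_eq_add_indicator_of_two_valued hX f]
  exact (integrable_const _).add ((integrable_const _).indicator (hXm (measurableSet_singleton b)))

lemma integral_comp_of_two_valued [IsProbabilityMeasure P] (hXm : Measurable X)
    (hX : ∀ ω, X ω = a ∨ X ω = b) (f : α → ℝ) :
    ∫ ω, f (X ω) ∂P = f a + (f b - f a) * P.real {ω | X ω = b} := by
  have hB : MeasurableSet {ω | X ω = b} := hXm (measurableSet_singleton b)
  rw [comp_eq_add_indicator_of_two_valued hX f,
    integral_add (integrable_const _) ((integrable_const _).indicator hB),
    integral_const, integral_indicator_const _ hB]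
  simp [mul_comm]

end TwoValued

/-- `𝔼[(ξ - r)²]` when `ξ` rounds `r` stochastically to the grid `ℤ/s`, moving up from `l/s` to
`(l+1)/s` with probability `s r - l`. -/
noncomputable def quantizationVariance (s l r : ℝ) : ℝ := (s * r - l) * (1 - (s * r - l)) / s ^ 2

lemma quantizationVariance_le_one_div (s l r : ℝ) :
    quantizationVariance s l r ≤ 1 / (4 * s ^ 2) := by
  calc quantizationVariance s l r ≤ 1 / 4 / s ^ 2 := by
        unfold quantizationVariance
        gcongr
        nlinarith [sq_nonneg (s * r - l - 1 / 2)]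
    _ = 1 / (4 * s ^ 2) := by ring

lemma quantizationVariance_le_div {s l : ℝ} (hs : 0 < s) (hl : 0 ≤ l) (r : ℝ) :
    quantizationVariance s l r ≤ r / s := by
  calc quantizationVariance s l r ≤ s * r / s ^ 2 := by
        unfold quantizationVariance
        gcongr ?_ / _
        nlinarith [sq_nonneg (s * r - l)]
    _ = r / s := by field_simp

section Quantization

variable {Ω : Type*} [MeasurableSpace Ω] {P : Measure Ω} [IsProbabilityMeasure P] {X : Ω → ℝ}

lemma integral_sq_sub_of_two_valued (hXm : Measurable X) {a b p : ℝ}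
    (hX : ∀ ω, X ω = a ∨ X ω = b) (hp : P.real {ω | X ω = b} = p) (c : ℝ) :
    ∫ ω, (c * X ω - c * ((1 - p) * a + p * b)) ^ 2 ∂P = c ^ 2 * (p * (1 - p)) * (b - a) ^ 2 := by
  rw [integral_comp_of_two_valued hXm hX (fun x => (c * x - c * ((1 - p) * a + p * b)) ^ 2), hp]
  ring

lemma integral_sq_quantization_error (hXm : Measurable X) {s l r : ℝ} (hs : 0 < s)
    (hlr : l / s ≤ r) (hX : ∀ ω, X ω = l / s ∨ X ω = (l + 1) / s)
    (hp : P {ω | X ω = (l + 1) / s} = ENNReal.ofReal (s * r - l)) {c y : ℝ} (hy : c * r = y) :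
    ∫ ω, (c * X ω - y) ^ 2 ∂P = c ^ 2 * quantizationVariance s l r := by
  set p := s * r - l
  have hp_nonneg : 0 ≤ p := by
    rw [div_le_iff₀ hs] at hlr
    linarith
  have hr : r = (1 - p) * (l / s) + p * ((l + 1) / s) := by
    field_simp
    ring
  have hP : P.real {ω | X ω = (l + 1) / s} = p := by
    rw [measureReal_def, hp, ENNReal.toReal_ofReal hp_nonneg]
  conv_lhs => rw [← hy, hr, integral_sq_sub_of_two_valued hXm hX hP]
  unfold quantizationVariance
  field_simp
  ring

end Quantization

theorem randomized_quantizer_total_variance_general {Ω : Type*} [MeasurableSpace Ω]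
    (P : Measure Ω) [IsProbabilityMeasure P]
    (d s : ℕ) (hs : 1 ≤ s) (g : EuclideanSpace ℝ (Fin d))
    (l : Fin d → ℕ)
    (hl : ∀ i, (l i : ℝ) / s ≤ |g i| / ‖g‖ ∧ |g i| / ‖g‖ ≤ ((l i : ℝ) + 1) / s)
    (ξ : Fin d → Ω → ℝ) (hmeas : ∀ i, Measurable (ξ i))
    (hval : ∀ i ω, ξ i ω = (l i : ℝ) / s ∨ ξ i ω = ((l i : ℝ) + 1) / s)
    (hp1 : ∀ i, P {ω | ξ i ω = ((l i : ℝ) + 1) / s}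
      = ENNReal.ofReal (s * (|g i| / ‖g‖) - l i)) :
    ∫ ω, ∑ i, (‖g‖ * Real.sign (g i) * ξ i ω - g i) ^ 2 ∂P
      ≤ min ((d : ℝ) / s ^ 2) (Real.sqrt d / s) * ‖g‖ ^ 2 := by
  have hs' : (0 : ℝ) < s := by exact_mod_cast hs
  set V : Fin d → ℝ := fun i => quantizationVariance s (l i) (|g i| / ‖g‖)
  have hcoord (i : Fin d) : ∫ ω, (‖g‖ * Real.sign (g i) * ξ i ω - g i) ^ 2 ∂P
      = (‖g‖ * Real.sign (g i)) ^ 2 * V i :=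
    integral_sq_quantization_error (hmeas i) hs' (hl i).1 (hval i) (hp1 i)
      (EuclideanSpace.norm_mul_sign_mul_abs_div_norm g i)
  have hV₁ (i : Fin d) : V i ≤ 1 / s ^ 2 :=
    (quantizationVariance_le_one_div _ _ _).trans (by gcongr; linarith [sq_nonneg (s : ℝ)])
  rw [integral_finsetSum _ fun i _ => integrable_comp_of_two_valued (hmeas i) (hval i)
      (fun x => (‖g‖ * Real.sign (g i) * x - g i) ^ 2),
    min_mul_of_nonneg _ _ (sq_nonneg _)]
  simp_rw [hcoord]
  refine le_min ?_ ?_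
  · calc _ ≤ ∑ _i : Fin d, ‖g‖ ^ 2 * (1 / s ^ 2) :=
          sum_le_sum fun i _ => Real.mul_sign_sq_mul_le _ _ (hV₁ i) (by positivity)
      _ = _ := by
        rw [sum_const, card_univ, Fintype.card_fin, nsmul_eq_mul]
        ring
  · calc _ ≤ ∑ i, ‖g‖ ^ 2 * (|g i| / ‖g‖ / s) :=
          sum_le_sum fun i _ => Real.mul_sign_sq_mul_le _ _
            (quantizationVariance_le_div hs' (Nat.cast_nonneg _) _) (by positivity)
      _ = ‖g‖ / s * ∑ i, ‖g‖ * (|g i| / ‖g‖) := by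
        rw [mul_sum]
        exact sum_congr rfl fun i _ => by ring
      _ ≤ ‖g‖ / s * (√d * ‖g‖) := by
        simp_rw [EuclideanSpace.norm_mul_abs_div_norm]
        gcongr
        simpa using EuclideanSpace.sum_abs_le_sqrt_card_mul_norm g
      _ = _ := by ring

/-- total variance of the randomized quantizer, QSGD Lemma 3.1 /
Remark A2 of the paper. With `s ≥ 1` quantization levels, `g ≠ 0`, `r_i = |g_i|/‖g‖₂`,
`l_i ∈ {0,…,s−1}` with `l_i/s ≤ r_i ≤ (l_i+1)/s`, and independent `ξ_i` taking value `l_i/s`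
with probability `1 − (s·r_i − l_i)` and `(l_i+1)/s` with probability `s·r_i − l_i`, the
quantizer `Q(g)_i = ‖g‖₂·sign(g_i)·ξ_i` satisfies
`E[‖Q(g) − g‖₂²] ≤ min{d/s², √d/s}·‖g‖₂²`. -/
theorem randomized_quantizer_total_variance {Ω : Type*} [MeasurableSpace Ω]
    (P : Measure Ω) [IsProbabilityMeasure P]
    (d s : ℕ) (hs : 1 ≤ s) (g : EuclideanSpace ℝ (Fin d)) (hg : g ≠ 0)
    (l : Fin d → ℕ) (hls : ∀ i, l i < s)
    (hl : ∀ i, (l i : ℝ) / s ≤ |g i| / ‖g‖ ∧ |g i| / ‖g‖ ≤ ((l i : ℝ) + 1) / s)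
    (ξ : Fin d → Ω → ℝ) (hmeas : ∀ i, Measurable (ξ i))
    (hindep : iIndepFun ξ P)
    (hval : ∀ i ω, ξ i ω = (l i : ℝ) / s ∨ ξ i ω = ((l i : ℝ) + 1) / s)
    (hp1 : ∀ i, P {ω | ξ i ω = ((l i : ℝ) + 1) / s}
      = ENNReal.ofReal (s * (|g i| / ‖g‖) - l i))
    (hp0 : ∀ i, P {ω | ξ i ω = (l i : ℝ) / s}
      = ENNReal.ofReal (1 - (s * (|g i| / ‖g‖) - l i))) :
    ∫ ω, ∑ i, (‖g‖ * Real.sign (g i) * ξ i ω - g i) ^ 2 ∂P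
      ≤ min ((d : ℝ) / s ^ 2) (Real.sqrt d / s) * ‖g‖ ^ 2 :=
  randomized_quantizer_total_variance_general P d s hs g l hl ξ hmeas hval hp1
end
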